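/- For f ∈ D(A_L) ∩ D(B_L) with Fourier-Hermite coefficients c_α, one has (2π)^{−2}‖A_L f‖₂² + (2π)²‖B_L f‖₂² ≥ ‖L‖²‖f‖₂². -/

import Mathlib

open MeasureTheory Real Finset

noncomputable section

/-- Euclidean norm of a vector in `Fin d → ℝ`. -/
def nrm {d : ℕ} (L : Fin d → ℝ) : ℝ := Real.sqrt (∑ i, L i ^ 2)

/-- Dot product on `Fin d → ℝ`. -/
def dotR {d : ℕ} (L x : Fin d → ℝ) : ℝ := ∑ i, L i * x i

/-- The position-type operator `A_L f (x) = 2π⟨L,x⟩ f(x)`. -/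
def opA {d : ℕ} (L : Fin d → ℝ) (f : (Fin d → ℝ) → ℂ) : (Fin d → ℝ) → ℂ :=
  fun x => ((2 * Real.pi * dotR L x : ℝ) : ℂ) * f x

/-- The momentum-type operator `B_L f (x) = (i/2π) ∂f/∂L (x)`. -/
def opB {d : ℕ} (L : Fin d → ℝ) (f : (Fin d → ℝ) → ℂ) : (Fin d → ℝ) → ℂ :=
  fun x => (Complex.I / (2 * Real.pi)) * fderiv ℝ f x L

/-- Squared `L²` norm. -/
def l2sq {d : ℕ} (g : (Fin d → ℝ) → ℂ) : ℝ := ∫ x, ‖g x‖ ^ 2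

/-- `L²` inner product. -/
def ip {d : ℕ} (g f : (Fin d → ℝ) → ℂ) : ℂ := ∫ x, g x * (starRingEnd ℂ) (f x)

/-- Variance of `f` with respect to an operator applied to `f` (given as `g = A f`). -/
def varOp {d : ℕ} (g f : (Fin d → ℝ) → ℂ) : ℝ :=
  l2sq g - ‖ip g f‖ ^ 2 / l2sq f

/-- The directional uncertainty product. -/
def UP {d : ℕ} (L : Fin d → ℝ) (f : (Fin d → ℝ) → ℂ) : ℝ :=
  varOp (opA L f) f * varOp (opB L f) f / (nrm L ^ 4 * l2sq f ^ 2)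

/-- Domain condition: `f ∈ L²`, `A_L f ∈ L²`, `f` differentiable with `B_L f ∈ L²`. -/
def InDom {d : ℕ} (L : Fin d → ℝ) (f : (Fin d → ℝ) → ℂ) : Prop :=
  MemLp f 2 (volume : Measure (Fin d → ℝ)) ∧ MemLp (opA L f) 2 volume ∧
    Differentiable ℝ f ∧ MemLp (opB L f) 2 volume

/-- The Fourier transform with kernel `e^{-2πi⟨x,ξ⟩}`. -/
def FT {d : ℕ} (f : (Fin d → ℝ) → ℂ) : (Fin d → ℝ) → ℂ :=
  fun ξ => ∫ x, Complex.exp (-2 * Real.pi * dotR x ξ * Complex.I) * f x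

end

/-!
With `g = ⟨L,x⟩ f` and `h = ∂_L f`, expanding `0 ≤ ‖g + h‖₂²` gives
`‖g‖₂² + ‖h‖₂² ≥ -2 Re⟨g, h⟩`, and `2 Re⟨g, h⟩ = ∫ ⟨L,x⟩ ∂_L |f|² = -‖L‖² ‖f‖₂²` by integration by
parts. The factors `2π` in `A_L` and `B_L` cancel against the weights `(2π)^{∓2}`.
-/

open scoped InnerProductSpace

section L2

variable {α F : Type*} [MeasurableSpace α] {μ : Measure α}
  [NormedAddCommGroup F] [InnerProductSpace ℝ F]

theorem MeasureTheory.MemLp.integrable_inner {𝕜 E : Type*} [RCLike 𝕜] [NormedAddCommGroup E]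
    [InnerProductSpace 𝕜 E] {g h : α → E} (hg : MemLp g 2 μ) (hh : MemLp h 2 μ) :
    Integrable (fun x => ⟪g x, h x⟫_𝕜) μ :=
  (L2.integrable_inner (hg.toLp g) (hh.toLp h)).congr <| by
    filter_upwards [hg.coeFn_toLp, hh.coeFn_toLp] with x hgx hhx
    rw [hgx, hhx]

theorem neg_two_mul_integral_inner_le {g h : α → F} (hg : MemLp g 2 μ) (hh : MemLp h 2 μ) :
    -(2 * ∫ x, ⟪g x, h x⟫_ℝ ∂μ) ≤ ∫ x, ‖g x‖ ^ 2 ∂μ + ∫ x, ‖h x‖ ^ 2 ∂μ := by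
  have hg2 := (memLp_two_iff_integrable_sq_norm hg.1).1 hg
  have hh2 := (memLp_two_iff_integrable_sq_norm hh.1).1 hh
  have hexpand : ∫ x, ‖g x + h x‖ ^ 2 ∂μ
      = ∫ x, ‖g x‖ ^ 2 ∂μ + 2 * ∫ x, ⟪g x, h x⟫_ℝ ∂μ + ∫ x, ‖h x‖ ^ 2 ∂μ := by
    simp_rw [norm_add_sq_real]
    have hinner := (hg.integrable_inner (𝕜 := ℝ) hh).const_mul 2
    rw [integral_add _ hh2, integral_add hg2 hinner, integral_const_mul]
    exact hg2.add hinner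
  have hnonneg : 0 ≤ ∫ x, ‖g x + h x‖ ^ 2 ∂μ := integral_nonneg fun x => by positivity
  linarith

end L2

section IntegrationByParts

variable {E F : Type*} [NormedAddCommGroup E] [NormedSpace ℝ E] [FiniteDimensional ℝ E]
  [MeasurableSpace E] [BorelSpace E] {μ : Measure E} [μ.IsAddHaarMeasure]
  [NormedAddCommGroup F] [InnerProductSpace ℝ F]

theorem two_mul_integral_inner_smul_fderiv {f : E → F} (φ : E →L[ℝ] ℝ) (v : E)
    (hf : Differentiable ℝ f) (hf2 : MemLp f 2 μ) (hφf : MemLp (fun x => φ x • f x) 2 μ)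
    (hdf : MemLp (fun x => fderiv ℝ f x v) 2 μ) :
    2 * ∫ x, ⟪φ x • f x, fderiv ℝ f x v⟫_ℝ ∂μ = -(φ v * ∫ x, ‖f x‖ ^ 2 ∂μ) := by
  have hibp := integral_bilinear_hasFDerivAt_right_eq_neg_left_of_integrable (μ := μ) (v := v)
    (B := ContinuousLinearMap.mul ℝ ℝ) (f := φ) (f' := fun _ => φ) (g := (‖f ·‖ ^ 2))
    (g' := fun x => 2 • (innerSL ℝ (f x)).comp (fderiv ℝ f x))
    (by simpa using ((memLp_two_iff_integrable_sq_norm hf2.1).1 hf2).const_mul (φ v))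
    (by simpa [real_inner_smul_left, mul_left_comm] using
      ((hφf.integrable_inner (𝕜 := ℝ) hdf).const_mul 2))
    (by simpa [real_inner_smul_left] using hφf.integrable_inner (𝕜 := ℝ) hf2)
    (fun x _ => φ.hasFDerivAt) (fun x _ => (hf x).hasFDerivAt.norm_sq)
  simp only [ContinuousLinearMap.mul_apply', smul_apply,
    ContinuousLinearMap.comp_apply, innerSL_apply_apply, nsmul_eq_mul, Nat.cast_ofNat] at hibp
  rw [← integral_const_mul, ← integral_const_mul, ← hibp]
  congr 1 with x
  rw [real_inner_smul_left]
  ring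

end IntegrationByParts

section Directional

variable {d : ℕ}

def dotRCLM (L : Fin d → ℝ) : (Fin d → ℝ) →L[ℝ] ℝ := ∑ i, L i • ContinuousLinearMap.proj i

@[simp]
theorem dotRCLM_apply (L x : Fin d → ℝ) : dotRCLM L x = dotR L x := by
  simp [dotRCLM, dotR]

theorem dotR_self (L : Fin d → ℝ) : dotR L L = nrm L ^ 2 := by
  rw [nrm, Real.sq_sqrt (by positivity), dotR]
  simp_rw [sq]

theorem dotR_smul_eq_inv_smul_opA (L : Fin d → ℝ) (f : (Fin d → ℝ) → ℂ) :
    (fun x => dotR L x • f x) = (2 * π)⁻¹ • opA L f := by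
  ext x
  simp only [opA, Pi.smul_apply, Complex.real_smul]
  push_cast
  field_simp

theorem fderiv_apply_eq_smul_opB (L : Fin d → ℝ) (f : (Fin d → ℝ) → ℂ) :
    (fun x => fderiv ℝ f x L) = (-(2 * π) * Complex.I) • opB L f := by
  ext x
  simp only [opB, Pi.smul_apply, smul_eq_mul]
  field_simp
  simp

theorem integral_norm_sq_dotR_smul (L : Fin d → ℝ) (f : (Fin d → ℝ) → ℂ) :
    ∫ x, ‖dotR L x • f x‖ ^ 2 = (2 * π) ^ (-2 : ℤ) * l2sq (opA L f) := by
  rw [l2sq, ← integral_const_mul]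
  congr 1 with x
  rw [congrFun (dotR_smul_eq_inv_smul_opA L f) x, Pi.smul_apply, norm_smul, mul_pow,
    Real.norm_of_nonneg (by positivity), inv_pow, zpow_neg, zpow_two, sq]

theorem integral_norm_sq_fderiv (L : Fin d → ℝ) (f : (Fin d → ℝ) → ℂ) :
    ∫ x, ‖fderiv ℝ f x L‖ ^ 2 = (2 * π) ^ 2 * l2sq (opB L f) := by
  rw [l2sq, ← integral_const_mul]
  congr 1 with x
  rw [congrFun (fderiv_apply_eq_smul_opB L f) x, Pi.smul_apply, norm_smul, mul_pow]
  simp [abs_of_pos pi_pos]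

end Directional

/-- the additive form of the uncertainty principle. -/
theorem additive_uncertainty_inequality {d : ℕ} (L : Fin d → ℝ)
    (f : (Fin d → ℝ) → ℂ) (hdom : InDom L f) :
    (2 * Real.pi) ^ (-2 : ℤ) * l2sq (opA L f) + (2 * Real.pi) ^ 2 * l2sq (opB L f)
      ≥ nrm L ^ 2 * l2sq f := by
  obtain ⟨hf, hA, hdiff, hB⟩ := hdom
  have hg : MemLp (fun x => dotRCLM L x • f x) 2 volume := by
    simpa only [dotRCLM_apply, dotR_smul_eq_inv_smul_opA] using hA.const_smul (2 * π)⁻¹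
  have hh : MemLp (fun x => fderiv ℝ f x L) 2 volume := by
    simpa only [fderiv_apply_eq_smul_opB] using hB.const_smul (-(2 * π) * Complex.I)
  have hcross := two_mul_integral_inner_smul_fderiv (dotRCLM L) L hdiff hf hg hh
  have hbound := neg_two_mul_integral_inner_le hg hh
  simp only [dotRCLM_apply, dotR_self, integral_norm_sq_dotR_smul, integral_norm_sq_fderiv,
    ← l2sq.eq_1] at hcross hbound
  linarith
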